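/- Suppose x⋆ is the unique minimizer of ‖x‖₁ subject to ‖y − Ax‖₂ ≤ ε, and t > 0 satisfies ‖x‖₁ − ‖x⋆‖₁ ≥ t‖x − x⋆‖₂ for all x with ‖y − Ax‖₂ ≤ ε and ‖x − x⋆‖₂ ≤ M₀. Let x_{n+1} = xₙ − γP sgn(xₙ) with ‖y − Axₙ‖₂ ≤ ε and ‖xₙ − x⋆‖₂ ≤ M₀. Then for any μ > 1, if ‖xₙ − x⋆‖₂ ≥ γ(μ/(2t))·max_x‖P sgn(x)‖₂² + (2/t)√(Nλ)·ε, then ‖x_{n+1} − x⋆‖₂² ≤ ‖xₙ − x⋆‖₂² − γ²(μ−1)·max_x‖P sgn(x)‖₂², where λ is the largest eigenvalue of (AAᵀ)⁻¹. -/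

import Mathlib

open Matrix BigOperators

noncomputable def l1 {N : ℕ} (x : Fin N → ℝ) : ℝ := ∑ i, |x i|

noncomputable def l2 {N : ℕ} (x : Fin N → ℝ) : ℝ := Real.sqrt (∑ i, (x i) ^ 2)

noncomputable def sgn {N : ℕ} (x : Fin N → ℝ) : Fin N → ℝ := fun i => Real.sign (x i)

noncomputable def Pmat {M N : ℕ} (A : Matrix (Fin M) (Fin N) ℝ) : Matrix (Fin N) (Fin N) ℝ :=
  1 - Aᵀ * (A * Aᵀ)⁻¹ * A

/-!
Write `d = xₙ - x⋆` and `s = sgn xₙ`, so that `xₙ₊₁ - x⋆ = d - γ P s` and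
`‖xₙ₊₁ - x⋆‖² = ‖d‖² - 2γ ⟨d, P s⟩ + γ² ‖P s‖²`. The last term is at most `γ² C`. Since `P` is
the symmetric projection onto `ker A`, `⟨d, P s⟩ = ⟨d, s⟩ - ⟨Aᵀ (AAᵀ)⁻¹ A d, s⟩`. Here
`⟨d, s⟩ ≥ ‖xₙ‖₁ - ‖x⋆‖₁ ≥ t ‖d‖` by the growth condition, while `‖A d‖ ≤ 2ε` (both points are
feasible), `‖Aᵀ (AAᵀ)⁻¹ w‖² = ⟨w, (AAᵀ)⁻¹ w⟩ ≤ λ ‖w‖²` and `‖s‖ ≤ √N` bound the correction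
term by `2 √(Nλ) ε`. The distance hypothesis then gives `⟨d, P s⟩ ≥ γ μ C / 2`.
-/

section Norms

variable {N : ℕ}

lemma l2_eq_norm (x : Fin N → ℝ) : l2 x = ‖WithLp.toLp 2 x‖ := by
  simp [l2, EuclideanSpace.norm_eq]

lemma l2_nonneg (x : Fin N → ℝ) : 0 ≤ l2 x := Real.sqrt_nonneg _

lemma l2_sq (x : Fin N → ℝ) : l2 x ^ 2 = x ⬝ᵥ x := by
  rw [l2, Real.sq_sqrt (Finset.sum_nonneg fun i _ => sq_nonneg _)]
  simp [dotProduct, sq]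

lemma l2_sub_le (x y : Fin N → ℝ) : l2 (x - y) ≤ l2 x + l2 y := by
  simpa [l2_eq_norm] using norm_sub_le (WithLp.toLp 2 x) (WithLp.toLp 2 y)

lemma abs_dotProduct_le_l2_mul_l2 (x y : Fin N → ℝ) : |x ⬝ᵥ y| ≤ l2 x * l2 y := by
  simpa [l2_eq_norm, EuclideanSpace.inner_eq_star_dotProduct, dotProduct_comm, mul_comm]
    using abs_real_inner_le_norm (WithLp.toLp 2 x) (WithLp.toLp 2 y)

lemma l2_sub_smul_sq (d v : Fin N → ℝ) (γ : ℝ) :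
    l2 (d - γ • v) ^ 2 = l2 d ^ 2 - 2 * γ * (d ⬝ᵥ v) + γ ^ 2 * l2 v ^ 2 := by
  simp only [l2_sq, sub_dotProduct, dotProduct_sub, smul_dotProduct, dotProduct_smul,
    dotProduct_comm v d, smul_eq_mul]
  ring

lemma Real.abs_sign_le_one (a : ℝ) : |Real.sign a| ≤ 1 := by
  rcases Real.sign_apply_eq a with h | h | h <;> simp [h]

lemma l2_sgn_le (x : Fin N → ℝ) : l2 (sgn x) ≤ Real.sqrt N := by
  refine Real.sqrt_le_sqrt ?_
  calc ∑ i, sgn x i ^ 2 ≤ ∑ _i : Fin N, (1 : ℝ) :=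
        Finset.sum_le_sum fun i _ => by
          rw [← sq_abs]; exact pow_le_one₀ (abs_nonneg _) (Real.abs_sign_le_one _)
    _ = N := by simp

lemma l1_sub_l1_le_dotProduct_sgn (x z : Fin N → ℝ) : l1 x - l1 z ≤ (x - z) ⬝ᵥ sgn x := by
  rw [l1, l1, ← Finset.sum_sub_distrib, dotProduct]
  refine Finset.sum_le_sum fun i _ => ?_
  have hx : x i * Real.sign (x i) = |x i| := by
    rcases lt_trichotomy (x i) 0 with h | h | h
    · rw [Real.sign_of_neg h, abs_of_neg h]; ring
    · simp [h]
    · rw [Real.sign_of_pos h, abs_of_pos h]; ring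
  have hz : z i * Real.sign (x i) ≤ |z i| :=
    calc z i * Real.sign (x i) ≤ |z i| * |Real.sign (x i)| := (le_abs_self _).trans (abs_mul _ _).le
      _ ≤ |z i| := mul_le_of_le_one_right (abs_nonneg _) (Real.abs_sign_le_one _)
  simp only [Pi.sub_apply, sgn, sub_mul, hx]
  linarith

end Norms

open scoped MatrixOrder in
lemma Matrix.IsHermitian.dotProduct_mulVec_le {n : Type*} [Fintype n] [DecidableEq n]
    {B : Matrix n n ℝ} (hB : B.IsHermitian) {lam : ℝ} (hlam : lam ∈ upperBounds (spectrum ℝ B))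
    (w : n → ℝ) : w ⬝ᵥ (B *ᵥ w) ≤ lam * (w ⬝ᵥ w) := by
  have hle : B ≤ algebraMap ℝ _ lam := le_algebraMap_of_spectrum_le hlam hB.isSelfAdjoint
  simpa [sub_mulVec, dotProduct_sub, Algebra.algebraMap_eq_smul_one, smul_mulVec]
    using (Matrix.le_iff.mp hle).dotProduct_mulVec_nonneg w

open scoped MatrixOrder in
lemma Matrix.PosDef.pos_of_mem_spectrum {n : Type*} [Fintype n] [DecidableEq n]
    {B : Matrix n n ℝ} (hB : B.PosDef) {x : ℝ} (hx : x ∈ spectrum ℝ B) : 0 < x :=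
  hB.isStrictlyPositive.spectrum_pos hx

section Projection

variable {M N : ℕ} (A : Matrix (Fin M) (Fin N) ℝ)

lemma posDef_mul_transpose (hinv : IsUnit (A * Aᵀ)) : (A * Aᵀ).PosDef := by
  have h : (A * Aᵀ).PosSemidef := by
    simpa [conjTranspose_eq_transpose_of_trivial] using posSemidef_self_mul_conjTranspose A
  exact h.posDef_iff_isUnit.mpr hinv

lemma Pmat_transpose : (Pmat A)ᵀ = Pmat A := by
  simp [Pmat, transpose_sub, transpose_mul, transpose_nonsing_inv, Matrix.mul_assoc]

lemma dotProduct_Pmat_mulVec (d s : Fin N → ℝ) :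
    d ⬝ᵥ (Pmat A *ᵥ s) = d ⬝ᵥ s - (Aᵀ *ᵥ ((A * Aᵀ)⁻¹ *ᵥ (A *ᵥ d))) ⬝ᵥ s := by
  rw [dotProduct_mulVec, ← mulVec_transpose, Pmat_transpose, Pmat, sub_mulVec, one_mulVec,
    sub_dotProduct, mulVec_mulVec, mulVec_mulVec]

lemma l2_transpose_mulVec_inv_sq (hinv : IsUnit (A * Aᵀ)) (w : Fin M → ℝ) :
    l2 (Aᵀ *ᵥ ((A * Aᵀ)⁻¹ *ᵥ w)) ^ 2 = w ⬝ᵥ ((A * Aᵀ)⁻¹ *ᵥ w) := by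
  have hdet : IsUnit (A * Aᵀ).det := (isUnit_iff_isUnit_det _).mp hinv
  rw [l2_sq, dotProduct_mulVec, vecMul_transpose, mulVec_mulVec, mulVec_mulVec,
    mul_nonsing_inv _ hdet, one_mulVec]

lemma l2_transpose_mulVec_inv_le (hinv : IsUnit (A * Aᵀ)) {lam : ℝ}
    (hlam : lam ∈ upperBounds (spectrum ℝ (A * Aᵀ)⁻¹)) (hlam₀ : 0 ≤ lam) (w : Fin M → ℝ) :
    l2 (Aᵀ *ᵥ ((A * Aᵀ)⁻¹ *ᵥ w)) ≤ Real.sqrt lam * l2 w := by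
  have hsq : l2 (Aᵀ *ᵥ ((A * Aᵀ)⁻¹ *ᵥ w)) ^ 2 ≤ (Real.sqrt lam * l2 w) ^ 2 := by
    rw [l2_transpose_mulVec_inv_sq A hinv, mul_pow, Real.sq_sqrt hlam₀, l2_sq]
    exact (posDef_mul_transpose A hinv).inv.isHermitian.dotProduct_mulVec_le hlam w
  exact le_of_pow_le_pow_left₀ two_ne_zero (mul_nonneg (Real.sqrt_nonneg _) (l2_nonneg w)) hsq

end Projection

lemma le_dotProduct_Pmat_mulVec_sgn {M N : ℕ} (A : Matrix (Fin M) (Fin N) ℝ) (hinv : IsUnit (A * Aᵀ))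
    {y : Fin M → ℝ} {ε t lam : ℝ} {x xs : Fin N → ℝ}
    (hxs : l2 (y - A *ᵥ xs) ≤ ε) (hx : l2 (y - A *ᵥ x) ≤ ε)
    (hgrow : t * l2 (x - xs) ≤ l1 x - l1 xs)
    (hlam : lam ∈ upperBounds (spectrum ℝ (A * Aᵀ)⁻¹)) (hlam₀ : 0 ≤ lam) :
    t * l2 (x - xs) - 2 * Real.sqrt (N * lam) * ε ≤ (x - xs) ⬝ᵥ (Pmat A *ᵥ sgn x) := by
  set w := A *ᵥ (x - xs)
  have hw : l2 w ≤ 2 * ε := by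
    have : w = (y - A *ᵥ xs) - (y - A *ᵥ x) := by simp only [w, mulVec_sub]; abel
    rw [this]; linarith [l2_sub_le (y - A *ᵥ xs) (y - A *ᵥ x)]
  have hcorr : (Aᵀ *ᵥ ((A * Aᵀ)⁻¹ *ᵥ w)) ⬝ᵥ sgn x ≤ 2 * Real.sqrt (N * lam) * ε :=
    calc _ ≤ l2 (Aᵀ *ᵥ ((A * Aᵀ)⁻¹ *ᵥ w)) * l2 (sgn x) :=
          (le_abs_self _).trans (abs_dotProduct_le_l2_mul_l2 _ _)
      _ ≤ (Real.sqrt lam * l2 w) * Real.sqrt N :=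
          mul_le_mul (l2_transpose_mulVec_inv_le A hinv hlam hlam₀ w) (l2_sgn_le x)
            (l2_nonneg _) (mul_nonneg (Real.sqrt_nonneg _) (l2_nonneg w))
      _ ≤ (Real.sqrt lam * (2 * ε)) * Real.sqrt N := by gcongr
      _ = 2 * Real.sqrt (N * lam) * ε := by
          rw [Real.sqrt_mul (Nat.cast_nonneg N)]; ring
  rw [dotProduct_Pmat_mulVec]
  linarith [l1_sub_l1_le_dotProduct_sgn x xs]

theorem stmt16_general {M N : ℕ} (A : Matrix (Fin M) (Fin N) ℝ) (hinv : IsUnit (A * Aᵀ))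
    (y : Fin M → ℝ) (ε : ℝ)
    (xs : Fin N → ℝ) (hxs : l2 (y - A *ᵥ xs) ≤ ε)
    (M₀ t : ℝ) (ht : 0 < t)
    (hgrow : ∀ x : Fin N → ℝ, l2 (y - A *ᵥ x) ≤ ε → l2 (x - xs) ≤ M₀ →
      l1 x - l1 xs ≥ t * l2 (x - xs))
    (C : ℝ) (hC : IsGreatest (Set.range fun z : Fin N → ℝ => (l2 (Pmat A *ᵥ sgn z)) ^ 2) C)
    (lam : ℝ) (hlam : IsGreatest (spectrum ℝ ((A * Aᵀ)⁻¹)) lam)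
    (γ μ : ℝ) (hγ : 0 < γ)
    (xn xn1 : Fin N → ℝ) (hrec : xn1 = xn - γ • (Pmat A *ᵥ sgn xn))
    (hfeas : l2 (y - A *ᵥ xn) ≤ ε) (hbound : l2 (xn - xs) ≤ M₀)
    (hfar : l2 (xn - xs) ≥ γ * (μ / (2 * t)) * C + 2 / t * Real.sqrt (N * lam) * ε) :
    (l2 (xn1 - xs)) ^ 2 ≤ (l2 (xn - xs)) ^ 2 - γ ^ 2 * (μ - 1) * C := by
  have hlam₀ : 0 ≤ lam :=
    ((posDef_mul_transpose A hinv).inv.pos_of_mem_spectrum hlam.1).le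
  have hstep := le_dotProduct_Pmat_mulVec_sgn A hinv hxs hfeas (hgrow xn hfeas hbound) hlam.2 hlam₀
  have hfar' : γ * μ * C / 2 + 2 * Real.sqrt (N * lam) * ε ≤ t * l2 (xn - xs) := by
    have := mul_le_mul_of_nonneg_left hfar ht.le
    field_simp at this ⊢
    linarith
  have hv : l2 (Pmat A *ᵥ sgn xn) ^ 2 ≤ C := hC.2 ⟨xn, rfl⟩
  rw [hrec, sub_right_comm, l2_sub_smul_sq]
  nlinarith

theorem stmt16 {M N : ℕ} (A : Matrix (Fin M) (Fin N) ℝ) (hinv : IsUnit (A * Aᵀ))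
    (y : Fin M → ℝ) (ε : ℝ) (hε : 0 ≤ ε)
    (xs : Fin N → ℝ) (hxs : l2 (y - A *ᵥ xs) ≤ ε)
    (huniq : ∀ x : Fin N → ℝ, l2 (y - A *ᵥ x) ≤ ε → x ≠ xs → l1 xs < l1 x)
    (M₀ t : ℝ) (hM₀ : 0 < M₀) (ht : 0 < t)
    (hgrow : ∀ x : Fin N → ℝ, l2 (y - A *ᵥ x) ≤ ε → l2 (x - xs) ≤ M₀ →
      l1 x - l1 xs ≥ t * l2 (x - xs))
    (C : ℝ) (hC : IsGreatest (Set.range fun z : Fin N → ℝ => (l2 (Pmat A *ᵥ sgn z)) ^ 2) C)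
    (lam : ℝ) (hlam : IsGreatest (spectrum ℝ ((A * Aᵀ)⁻¹)) lam)
    (γ μ : ℝ) (hγ : 0 < γ) (hμ : 1 < μ)
    (xn xn1 : Fin N → ℝ) (hrec : xn1 = xn - γ • (Pmat A *ᵥ sgn xn))
    (hfeas : l2 (y - A *ᵥ xn) ≤ ε) (hbound : l2 (xn - xs) ≤ M₀)
    (hfar : l2 (xn - xs) ≥ γ * (μ / (2 * t)) * C + 2 / t * Real.sqrt (N * lam) * ε) :
    (l2 (xn1 - xs)) ^ 2 ≤ (l2 (xn - xs)) ^ 2 - γ ^ 2 * (μ - 1) * C :=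
  stmt16_general A hinv y ε xs hxs M₀ t ht hgrow C hC lam hlam γ μ hγ xn xn1 hrec hfeas hbound hfar
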